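/- For every f in X = ℓ¹([0,1], ℂ), the norm of f is recovered from the continuous functions: ‖f‖₁ = sup { |∑_{x ∈ [0,1]} g(x) f(x)| : g ∈ C([0,1], ℂ), ‖g‖_∞ ≤ 1 }. In other words, C[0,1] is a determinant (1-norming) subspace of X* = B[0,1]. -/

import Mathlib

/-!
The pairing with any `g` of sup norm at most `1` is bounded by `‖f‖₁`, termwise. Conversely, a
finite set `s` carries all of `‖f‖₁` up to `ε`; on `s` the phases `‖f x‖ / f x` form a continuous
function (a finite set is discrete and closed), which Tietze extends to all of `[0,1]` with values
in the closed unit disc. Pairing `f` with this extension gives `∑_{x ∈ s} ‖f x‖` on `s` and at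
most `∑_{x ∉ s} ‖f x‖ ≤ ε` in absolute value off `s`.
-/

open scoped lp

theorem RCLike.exists_norm_le_one_mul_eq_norm {𝕜 : Type*} [RCLike 𝕜] (z : 𝕜) :
    ∃ u : 𝕜, ‖u‖ ≤ 1 ∧ u * z = ‖z‖ := by
  rcases eq_or_ne z 0 with rfl | hz
  · exact ⟨0, by simp, by simp⟩
  refine ⟨‖z‖ / z, ?_, div_mul_cancel₀ _ hz⟩
  rw [norm_div, RCLike.norm_ofReal, abs_norm]
  exact div_self_le_one _

theorem ContinuousMap.exists_norm_le_one_eqOn_finset {X 𝕜 : Type*} [TopologicalSpace X]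
    [NormalSpace X] [T1Space X] [RCLike 𝕜] (s : Finset X) (v : X → 𝕜)
    (hv : ∀ x ∈ s, ‖v x‖ ≤ 1) :
    ∃ g : C(X, 𝕜), (∀ x, ‖g x‖ ≤ 1) ∧ ∀ x ∈ s, g x = v x := by
  let v₀ : C((s : Set X), 𝕜) := ⟨fun x => v x, continuous_of_discreteTopology⟩
  obtain ⟨g, hg, hgv⟩ := v₀.exists_forall_mem_restrict_eq s.finite_toSet.isClosed
    (t := Metric.closedBall 0 1) fun x => mem_closedBall_zero_iff.2 (hv x x.2)
  refine ⟨g, fun x => by simpa using hg x, fun x hx => ?_⟩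
  exact congr($hgv ⟨x, hx⟩)

namespace lp

variable {α 𝕜 : Type*} [RCLike 𝕜]

theorem hasSum_norm_of_one {E : α → Type*} [∀ i, NormedAddCommGroup (E i)] (f : lp E 1) :
    HasSum (fun i => ‖f i‖) ‖f‖ := by
  simpa using lp.hasSum_norm (by norm_num) f

theorem norm_mul_le_of_norm_le_one (f : ℓ¹(α, 𝕜)) {g : α → 𝕜} (hg : ∀ i, ‖g i‖ ≤ 1) (i : α) :
    ‖g i * f i‖ ≤ ‖f i‖ := by
  rw [norm_mul]
  exact mul_le_of_le_one_left (norm_nonneg _) (hg i)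

theorem norm_tsum_mul_le (f : ℓ¹(α, 𝕜)) {g : α → 𝕜} (hg : ∀ i, ‖g i‖ ≤ 1) :
    ‖∑' i, g i * f i‖ ≤ ‖f‖ :=
  tsum_of_norm_bounded (hasSum_norm_of_one f) (norm_mul_le_of_norm_le_one f hg)

theorem two_mul_sum_norm_sub_norm_le_norm_tsum_mul (f : ℓ¹(α, 𝕜)) {g : α → 𝕜}
    (hg : ∀ i, ‖g i‖ ≤ 1) (s : Finset α) (hs : ∀ i ∈ s, g i * f i = ‖f i‖) :
    2 * ∑ i ∈ s, ‖f i‖ - ‖f‖ ≤ ‖∑' i, g i * f i‖ := by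
  have hf := hasSum_norm_of_one f
  have hgf : Summable fun i => g i * f i :=
    hf.summable.of_norm_bounded (norm_mul_le_of_norm_le_one f hg)
  have hhead : ∑ i ∈ s, g i * f i = ((∑ i ∈ s, ‖f i‖ : ℝ) : 𝕜) := by
    push_cast
    exact Finset.sum_congr rfl hs
  have htail : ‖∑' i : ((s : Set α)ᶜ : Set α), g i * f i‖ ≤
      ∑' i : ((s : Set α)ᶜ : Set α), ‖f i‖ :=
    tsum_of_norm_bounded (hf.summable.subtype _).hasSum fun i => norm_mul_le_of_norm_le_one f hg i
  have hsplit := hgf.sum_add_tsum_compl (s := s)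
  have hsplit_norm := hf.summable.sum_add_tsum_compl (s := s)
  rw [hf.tsum_eq] at hsplit_norm
  have hhead_norm : ‖∑ i ∈ s, g i * f i‖ = ∑ i ∈ s, ‖f i‖ := by
    rw [hhead, RCLike.norm_ofReal, abs_of_nonneg (Finset.sum_nonneg fun i _ => norm_nonneg _)]
  have := norm_le_add_norm_add (∑ i ∈ s, g i * f i) (∑' i : ((s : Set α)ᶜ : Set α), g i * f i)
  rw [hsplit, hhead_norm] at this
  linarith

end lp

/-- `C[0,1]` is a determinant (1-norming) subspace of `X* = B[0,1]`: for every
`f ∈ X = ℓ¹([0,1], ℂ)`,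
`‖f‖₁ = sup { |∑_x g(x) f(x)| : g ∈ C([0,1], ℂ), ‖g‖_∞ ≤ 1 }`. -/
theorem l1_norm_eq_sSup_pairing_continuous
    (f : lp (fun _ : unitInterval => ℂ) 1) :
    ‖f‖ = sSup { r : ℝ | ∃ g : C(unitInterval, ℂ), ‖g‖ ≤ 1 ∧
        r = ‖∑' x : unitInterval, g x * f x‖ } := by
  symm
  refine csSup_eq_of_forall_le_of_forall_lt_exists_gt ⟨_, 0, by simp, rfl⟩ ?_ ?_
  · rintro r ⟨g, hg, rfl⟩
    exact lp.norm_tsum_mul_le f fun x => (g.norm_coe_le_norm x).trans hg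
  · intro w hw
    obtain ⟨s, hs⟩ : ∃ s : Finset unitInterval, (‖f‖ + w) / 2 < ∑ x ∈ s, ‖f x‖ :=
      ((lp.hasSum_norm_of_one f).eventually (eventually_gt_nhds (by linarith))).exists
    choose u hu_norm hu_mul using fun x => RCLike.exists_norm_le_one_mul_eq_norm (f x)
    obtain ⟨g, hg, hgu⟩ := ContinuousMap.exists_norm_le_one_eqOn_finset s u fun x _ => hu_norm x
    refine ⟨_, ⟨g, (g.norm_le zero_le_one).2 hg, rfl⟩, ?_⟩
    have := lp.two_mul_sum_norm_sub_norm_le_norm_tsum_mul f hg s fun x hx => by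
      rw [hgu x hx, hu_mul]
    linarith
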